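/- Let S be a finite semigroup and T an infinite automatic semigroup. Then S × T is automatic if and only if S² = S. -/

import Mathlib

/-
If `S × T` is automatic, fix `s : S`. Since `T` is infinite, some `(s, t)` is not the image of a
single letter, so it is represented by a word of length at least two, and `s` is a product.

Conversely, given an automatic structure `(A, L)` for `T`, use the alphabet `S × A` (up to an
equivalence `S ≃ Fin n`) and accept a word when its `A`-component lies in `L`. Since `S² = S`,
every `s` is a product of any prescribed positive number of factors, so each `(s, t)` is
represented. The padded relations of the new structure are those of `(A, L)`, read on
`A`-components, intersected with a condition on the `S`-components, which a finite automaton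
can check because it only has to remember two elements of the finite semigroup `S`.
-/

namespace AutoSg

/-- Evaluation of a nonempty word over alphabet `A` in a semigroup `S`
via the letter-interpretation map `ψ`; the empty word evaluates to `none`. -/
def evalWord {S : Type*} [Semigroup S] {A : Type*} (ψ : A → S) : List A → Option S
  | [] => none
  | a :: w => some ((w.map ψ).foldl (· * ·) (ψ a))

/-- The standard padding map `δ_A` on pairs of words, with `none` playing
the role of the padding symbol `$`. -/
def padMap {A : Type*} (u v : List A) : List (Option A × Option A) :=
  List.zipWith Prod.mk (u.map some ++ List.replicate (v.length - u.length) none)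
    (v.map some ++ List.replicate (u.length - v.length) none)

/-- `(A, L)` is an automatic structure for the semigroup `S` with respect to `ψ`. -/
structure IsAutomaticStructure (S : Type*) [Semigroup S] {A : Type*} [Finite A]
    (ψ : A → S) (L : Language A) : Prop where
  nonempty_words : ∀ w ∈ L, w ≠ []
  regular : L.IsRegular
  onto : ∀ s : S, ∃ w ∈ L, evalWord ψ w = some s
  eq_regular : Language.IsRegular
    {p : List (Option A × Option A) |
      ∃ u ∈ L, ∃ v ∈ L, p = padMap u v ∧ evalWord ψ u = evalWord ψ v}
  mul_regular : ∀ a : A, Language.IsRegular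
    {p : List (Option A × Option A) |
      ∃ u ∈ L, ∃ v ∈ L, p = padMap u v ∧ evalWord ψ (u ++ [a]) = evalWord ψ v}

/-- An automatic structure with uniqueness: each element of `S` is represented
by exactly one word of `L`. -/
structure IsAutomaticStructureWithUniqueness (S : Type*) [Semigroup S] {A : Type*} [Finite A]
    (ψ : A → S) (L : Language A) extends IsAutomaticStructure S ψ L : Prop where
  unique : ∀ u ∈ L, ∀ v ∈ L, evalWord ψ u = evalWord ψ v → u = v

/-- A semigroup is automatic if it admits an automatic structure. -/
def IsAutomaticSemigroup (S : Type*) [Semigroup S] : Prop :=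
  ∃ (A : Type) (_ : Finite A) (ψ : A → S) (L : Language A), IsAutomaticStructure S ψ L

end AutoSg

theorem DFA.isRegular_accepts {α σ : Type*} [Finite σ] (M : DFA α σ) : M.accepts.IsRegular :=
  Language.isRegular_iff.mpr ⟨σ, Fintype.ofFinite σ, M, rfl⟩

theorem Language.IsRegular.preimage_map {α β : Type*} {L : Language α} (h : L.IsRegular)
    (f : β → α) : Language.IsRegular (T := β) (List.map f ⁻¹' L) := by
  obtain ⟨σ, _, M, rfl⟩ := h
  exact ⟨σ, inferInstance, M.comap f, M.accepts_comap f⟩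

namespace AutoSg

section Eval

variable {S A : Type*} [Semigroup S] (ψ : A → S)

/-- `none` stands for the empty product. -/
def evalStep (x : Option S) (a : A) : Option S :=
  some (x.elim (ψ a) (· * ψ a))

theorem foldl_evalStep_some (w : List A) (x : S) :
    w.foldl (evalStep ψ) (some x) = some ((w.map ψ).foldl (· * ·) x) := by
  induction w generalizing x with
  | nil => rfl
  | cons a w ih => exact ih (x * ψ a)

theorem evalWord_eq_foldl (w : List A) : evalWord ψ w = w.foldl (evalStep ψ) none := by
  cases w with
  | nil => rfl
  | cons a w => exact (foldl_evalStep_some ψ w (ψ a)).symm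

theorem evalWord_append (u v : List A) :
    evalWord ψ (u ++ v) = v.foldl (evalStep ψ) (evalWord ψ u) := by
  simp only [evalWord_eq_foldl, List.foldl_append]

theorem exists_length_eq_evalWord_eq (hS : ∀ s : S, ∃ a b : S, s = a * b)
    (hψ : Function.Surjective ψ) (n : ℕ) (s : S) :
    ∃ w : List A, w.length = n + 1 ∧ evalWord ψ w = some s := by
  induction n generalizing s with
  | zero =>
    obtain ⟨a, rfl⟩ := hψ s
    exact ⟨[a], rfl, rfl⟩
  | succ n ih =>
    obtain ⟨x, y, rfl⟩ := hS s
    obtain ⟨w, hw, hwx⟩ := ih x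
    obtain ⟨b, rfl⟩ := hψ y
    refine ⟨w ++ [b], by simp [hw], ?_⟩
    rw [evalWord_append, hwx]
    rfl

theorem IsAutomaticStructure.exists_mul_eq_of_notMem_range {L : Language A} [Finite A]
    (h : IsAutomaticStructure S ψ L) {x : S} (hx : x ∉ Set.range ψ) :
    ∃ y a, x = y * ψ a := by
  obtain ⟨w, -, hw⟩ := h.onto x
  rcases List.eq_nil_or_concat w with rfl | ⟨r, a, rfl⟩
  · cases hw
  rw [List.concat_eq_append, evalWord_append] at hw
  rcases r with _ | ⟨b, r⟩
  · exact absurd ⟨a, Option.some.inj hw⟩ hx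
  · exact ⟨_, a, (Option.some.inj hw).symm⟩

end Eval

section Prod

theorem foldl_mul_prod {U V : Type*} [Mul U] [Mul V] (l : List (U × V)) (x : U × V) :
    l.foldl (· * ·) x
      = ((l.map Prod.fst).foldl (· * ·) x.1, (l.map Prod.snd).foldl (· * ·) x.2) := by
  induction l generalizing x with
  | nil => rfl
  | cons y l ih => exact ih (x * y)

variable {S T B A : Type*} [Semigroup S] [Semigroup T] (φ : B → S) (ψ : A → T)

theorem evalWord_prodMap (w : List (B × A)) :
    evalWord (Prod.map φ ψ) w
      = Option.map₂ Prod.mk (evalWord φ (w.map Prod.fst)) (evalWord ψ (w.map Prod.snd)) := by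
  cases w with
  | nil => rfl
  | cons x w =>
    simp only [evalWord, List.map_cons, foldl_mul_prod, List.map_map]
    rfl

theorem evalWord_prodMap_eq_iff (u v : List (B × A)) :
    evalWord (Prod.map φ ψ) u = evalWord (Prod.map φ ψ) v ↔
      evalWord φ (u.map Prod.fst) = evalWord φ (v.map Prod.fst) ∧
        evalWord ψ (u.map Prod.snd) = evalWord ψ (v.map Prod.snd) := by
  rw [evalWord_prodMap, evalWord_prodMap]
  cases u <;> cases v <;> simp [evalWord]

end Prod

section PadMap

variable {A B : Type*}

@[simp] theorem padMap_nil_nil : padMap ([] : List A) [] = [] := rfl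

@[simp] theorem padMap_cons_cons (a b : A) (u v : List A) :
    padMap (a :: u) (b :: v) = (some a, some b) :: padMap u v := by
  simp [padMap]

@[simp] theorem padMap_nil_cons (b : A) (v : List A) :
    padMap [] (b :: v) = (none, some b) :: padMap [] v := by
  simp [padMap, List.replicate_succ]

@[simp] theorem padMap_cons_nil (a : A) (u : List A) :
    padMap (a :: u) [] = (some a, none) :: padMap u [] := by
  simp [padMap, List.replicate_succ]

theorem padMap_eq_nil {u v : List A} (h : padMap u v = []) : u = [] ∧ v = [] := by
  cases u <;> cases v <;> simp_all

theorem padMap_map (f : B → A) (u v : List B) :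
    (padMap u v).map (Prod.map (Option.map f) (Option.map f)) = padMap (u.map f) (v.map f) := by
  induction u generalizing v with
  | nil =>
    induction v with
    | nil => rfl
    | cons b v ih => simpa using ih
  | cons a u ih =>
    cases v with
    | nil => simpa using ih []
    | cons b v => simpa using ih v

theorem exists_eq_padMap_of_map_eq_padMap (f : B → A) {p : List (Option B × Option B)}
    {u₀ v₀ : List A} (h : p.map (Prod.map (Option.map f) (Option.map f)) = padMap u₀ v₀) :
    ∃ u v, p = padMap u v ∧ u.map f = u₀ ∧ v.map f = v₀ := by
  induction p generalizing u₀ v₀ with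
  | nil =>
    obtain ⟨rfl, rfl⟩ := padMap_eq_nil h.symm
    exact ⟨[], [], rfl, rfl, rfl⟩
  | cons x p ih =>
    obtain ⟨x₁, x₂⟩ := x
    rcases u₀ with _ | ⟨a, u₀⟩ <;> rcases v₀ with _ | ⟨b, v₀⟩ <;>
      simp only [List.map_cons, Prod.map, padMap_nil_nil, padMap_nil_cons, padMap_cons_nil,
        padMap_cons_cons, reduceCtorEq, List.cons.injEq, Prod.mk.injEq, Option.map_eq_none_iff,
        Option.map_eq_some_iff] at h
    · obtain ⟨⟨rfl, b, rfl, rfl⟩, hp⟩ := h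
      obtain ⟨u, v, rfl, hu, rfl⟩ := ih hp
      obtain rfl := List.map_eq_nil_iff.mp hu
      exact ⟨[], b :: v, by simp, rfl, rfl⟩
    · obtain ⟨⟨⟨a, rfl, rfl⟩, rfl⟩, hp⟩ := h
      obtain ⟨u, v, rfl, rfl, hv⟩ := ih hp
      obtain rfl := List.map_eq_nil_iff.mp hv
      exact ⟨a :: u, [], by simp, rfl, rfl⟩
    · obtain ⟨⟨⟨a, rfl, rfl⟩, b, rfl, rfl⟩, hp⟩ := h
      obtain ⟨u, v, rfl, rfl, rfl⟩ := ih hp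
      exact ⟨a :: u, b :: v, by simp, rfl, rfl⟩

end PadMap

def padRel {A : Type*} (L : Language A) (r : List A → List A → Prop) :
    Language (Option A × Option A) :=
  {p | ∃ u ∈ L, ∃ v ∈ L, p = padMap u v ∧ r u v}

section PadEvalDFA

variable {S B : Type*} [Semigroup S] (φ : B → S)

def padEvalDFA (R : Set (Option S × Option S)) :
    DFA (Option B × Option B) (Option S × Option S) where
  step q x := (x.1.elim q.1 (evalStep φ q.1), x.2.elim q.2 (evalStep φ q.2))
  start := (none, none)
  accept := R

variable (R : Set (Option S × Option S))

theorem padEvalDFA_evalFrom_padMap (u v : List B) (c d : Option S) :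
    (padEvalDFA φ R).evalFrom (c, d) (padMap u v)
      = (u.foldl (evalStep φ) c, v.foldl (evalStep φ) d) := by
  induction u generalizing v c d with
  | nil =>
    induction v generalizing d with
    | nil => rfl
    | cons b v ih => rw [padMap_nil_cons, DFA.evalFrom_cons]; exact ih _
  | cons a u ih =>
    cases v with
    | nil => rw [padMap_cons_nil, DFA.evalFrom_cons]; exact ih [] _ _
    | cons b v => rw [padMap_cons_cons, DFA.evalFrom_cons]; exact ih v _ _

theorem padEvalDFA_eval_padMap (u v : List B) :
    (padEvalDFA φ R).eval (padMap u v) = (evalWord φ u, evalWord φ v) := by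
  rw [evalWord_eq_foldl, evalWord_eq_foldl]
  exact padEvalDFA_evalFrom_padMap φ R u v none none

end PadEvalDFA

section ProdStructure

variable {S T B A : Type*} [Semigroup S] [Semigroup T] (φ : B → S) (ψ : A → T)

theorem isRegular_padRel_append_prodMap [Finite S] {L : Language A} (l : List (B × A))
    (hL : (padRel L fun u v => evalWord ψ (u ++ l.map Prod.snd) = evalWord ψ v).IsRegular) :
    (padRel (List.map Prod.snd ⁻¹' L) fun u v =>
      evalWord (Prod.map φ ψ) (u ++ l) = evalWord (Prod.map φ ψ) v).IsRegular := by
  -- `evalWord φ (u ++ l)` depends only on `evalWord φ u`, so the `S`-part of the relation is a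
  -- condition `R` on the values of the two words, which the finite automaton `padEvalDFA` checks.
  set R : Set (Option S × Option S) := {q | (l.map Prod.fst).foldl (evalStep φ) q.1 = q.2}
  have hsplit : ∀ u v : List (B × A),
      evalWord (Prod.map φ ψ) (u ++ l) = evalWord (Prod.map φ ψ) v ↔
        (evalWord φ (u.map Prod.fst), evalWord φ (v.map Prod.fst)) ∈ R ∧
          evalWord ψ (u.map Prod.snd ++ l.map Prod.snd) = evalWord ψ (v.map Prod.snd) := by
    intro u v
    rw [evalWord_prodMap_eq_iff, List.map_append, List.map_append, evalWord_append]
    rfl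
  convert ((padEvalDFA φ R).isRegular_accepts.preimage_map
    (Prod.map (Option.map Prod.fst) (Option.map Prod.fst))).inf
    (hL.preimage_map (Prod.map (Option.map Prod.snd) (Option.map Prod.snd))) using 1
  ext p
  constructor
  · rintro ⟨u, hu, v, hv, rfl, huv⟩
    rw [hsplit] at huv
    refine ⟨?_, u.map Prod.snd, hu, v.map Prod.snd, hv, padMap_map _ u v, huv.2⟩
    change (padEvalDFA φ R).eval _ ∈ R
    rw [padMap_map, padEvalDFA_eval_padMap]
    exact huv.1
  · rintro ⟨hS, u₀, hu₀, v₀, hv₀, hp, huv₀⟩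
    obtain ⟨u, v, rfl, rfl, rfl⟩ := exists_eq_padMap_of_map_eq_padMap Prod.snd hp
    change (padEvalDFA φ R).eval _ ∈ R at hS
    rw [padMap_map, padEvalDFA_eval_padMap] at hS
    exact ⟨u, hu₀, v, hv₀, rfl, (hsplit u v).mpr ⟨hS, huv₀⟩⟩

theorem IsAutomaticStructure.prodMap [Finite S] [Finite B] [Finite A] {L : Language A}
    (h : IsAutomaticStructure T ψ L)
    (hφ : ∀ (n : ℕ) (s : S), ∃ w : List B, w.length = n + 1 ∧ evalWord φ w = some s) :
    IsAutomaticStructure (S × T) (Prod.map φ ψ) (List.map Prod.snd ⁻¹' L) where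
  nonempty_words w hw := by
    rintro rfl
    exact h.nonempty_words [] hw rfl
  regular := h.regular.preimage_map _
  onto := by
    rintro ⟨s, t⟩
    obtain ⟨w, hwL, hwt⟩ := h.onto t
    obtain ⟨l, hl, hls⟩ := hφ (w.length - 1) s
    have hlen : l.length = w.length := by
      have := List.length_pos_iff.mpr (h.nonempty_words w hwL)
      omega
    refine ⟨l.zip w, ?_, ?_⟩
    · show (l.zip w).map Prod.snd ∈ L
      rwa [List.map_snd_zip hlen.ge]
    · rw [evalWord_prodMap, List.map_fst_zip hlen.le, List.map_snd_zip hlen.ge, hls, hwt]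
      rfl
  eq_regular := by
    have h₀ := isRegular_padRel_append_prodMap φ ψ (L := L) []
      (by simp only [List.map_nil, List.append_nil]; exact h.eq_regular)
    simp only [List.append_nil] at h₀
    exact h₀
  mul_regular x := isRegular_padRel_append_prodMap φ ψ [x] (h.mul_regular x.2)

end ProdStructure

theorem exists_mul_eq_of_isAutomaticSemigroup_prod {S T : Type*} [Semigroup S] [Semigroup T]
    [Infinite T] (h : IsAutomaticSemigroup (S × T)) (s : S) : ∃ a b : S, s = a * b := by
  obtain ⟨A, _, ψ, L, hL⟩ := h
  have hnot : ¬ Set.range (fun t : T => (s, t)) ⊆ Set.range ψ := fun hsub =>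
    Set.infinite_range_of_injective (Prod.mk_right_injective s) ((Set.finite_range ψ).subset hsub)
  obtain ⟨_, ⟨t, rfl⟩, ht⟩ := Set.not_subset.mp hnot
  obtain ⟨y, a, hya⟩ := hL.exists_mul_eq_of_notMem_range ψ ht
  exact ⟨y.1, (ψ a).1, congrArg Prod.fst hya⟩

end AutoSg

open AutoSg in
/-- For a finite semigroup `S` and an infinite automatic semigroup `T`, the
direct product `S × T` is automatic iff `S² = S`. -/
theorem prod_automatic_iff_of_finite_left (S T : Type*) [Semigroup S] [Semigroup T]
    [Finite S] [Infinite T] (hT : IsAutomaticSemigroup T) :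
    IsAutomaticSemigroup (S × T) ↔ (∀ s : S, ∃ a b : S, s = a * b) := by
  refine ⟨exists_mul_eq_of_isAutomaticSemigroup_prod, fun hS => ?_⟩
  obtain ⟨A, _, ψ, L, hL⟩ := hT
  obtain ⟨n, ⟨e⟩⟩ := Finite.exists_equiv_fin S
  have hprod := hL.prodMap e.symm ψ (exists_length_eq_evalWord_eq e.symm hS e.symm.surjective)
  exact ⟨Fin n × A, inferInstance, _, _, hprod⟩
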